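/- arXiv:2408.10036 — 9 statements merged into one kernel-verified Lean document; each statement's English description precedes it below -/
import Mathlib

section
/- Let m, n be positive integers with m ≥ n, let 𝔽 be ℝ or ℂ, and let X, Y be m×n matrices over 𝔽 with X ≠ 0. There exists a Hermitian m×m matrix A over 𝔽 with A X = Y if and only if null X ⊆ null Y and Xᴴ Y is Hermitian. -/
/-!
If `A` is Hermitian with `A X = Y`, then `Xᴴ Y = Xᴴ A X` is Hermitian. Conversely, the kernel
condition gives some `C` with `C X = Y`. With `P` the orthogonal projection onto the column space
of `X`, the matrix `A = C P + P Cᴴ - P Cᴴ P` is Hermitian as soon as `P C P = P Cᴴ P`, i.e. as soon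
as `⟪C u, v⟫ = ⟪u, C v⟫` on the column space, which is what `Xᴴ Y` being Hermitian says; and
`A X = C X = Y` because `P X = X`.
-/

open Matrix

namespace LinearMap

open Submodule
open scoped InnerProductSpace

theorem exists_comp_eq_of_ker_le {K V V' V'' : Type*} [DivisionRing K]
    [AddCommGroup V] [Module K V] [AddCommGroup V'] [Module K V'] [AddCommGroup V''] [Module K V'']
    {f : V →ₗ[K] V'} {g : V →ₗ[K] V''} (h : ker f ≤ ker g) :
    ∃ c : V' →ₗ[K] V'', c ∘ₗ f = g := by
  obtain ⟨l, hl⟩ := ((ker f).liftQ f le_rfl).exists_leftInverse_of_injective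
    (ker_liftQ_eq_bot _ _ _ le_rfl)
  refine ⟨(ker f).liftQ g h ∘ₗ l, ext fun v => ?_⟩
  have : l (f v) = (ker f).mkQ v := LinearMap.congr_fun hl ((ker f).mkQ v)
  simp [this]

variable {𝕜 E F : Type*} [RCLike 𝕜] [NormedAddCommGroup E] [InnerProductSpace 𝕜 E]
  [NormedAddCommGroup F] [InnerProductSpace 𝕜 F] [FiniteDimensional 𝕜 E] [FiniteDimensional 𝕜 F]

theorem inner_map_symm_of_mem_range {x y : E →ₗ[𝕜] F} (hsym : (x.adjoint ∘ₗ y).IsSymmetric)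
    {c : F →ₗ[𝕜] F} (hc : c ∘ₗ x = y) {u v : F} (hu : u ∈ range x) (hv : v ∈ range x) :
    ⟪c u, v⟫_𝕜 = ⟪u, c v⟫_𝕜 := by
  obtain ⟨s, rfl⟩ := hu
  obtain ⟨t, rfl⟩ := hv
  have hy : ∀ w, c (x w) = y w := LinearMap.congr_fun hc
  calc ⟪c (x s), x t⟫_𝕜 = ⟪x.adjoint (y s), t⟫_𝕜 := by rw [hy, adjoint_inner_left]
    _ = ⟪s, x.adjoint (y t)⟫_𝕜 := hsym s t
    _ = ⟪x s, c (x t)⟫_𝕜 := by rw [hy, adjoint_inner_right]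

theorem exists_isSymmetric_comp_eq {x y : E →ₗ[𝕜] F} (hker : ker x ≤ ker y)
    (hsym : (x.adjoint ∘ₗ y).IsSymmetric) :
    ∃ a : F →ₗ[𝕜] F, a.IsSymmetric ∧ a ∘ₗ x = y := by
  obtain ⟨c, hc⟩ := exists_comp_eq_of_ker_le hker
  set p : F →ₗ[𝕜] F := (range x).starProjection.toLinearMap
  have hp : p.IsSymmetric := (range x).starProjection_isSymmetric
  have hpx : ∀ s, p (x s) = x s := fun s =>
    (range x).starProjection_eq_self_iff.mpr (mem_range_self x s)
  have hcp : ∀ u v, ⟪c (p u), p v⟫_𝕜 = ⟪p u, c (p v)⟫_𝕜 := fun u v =>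
    inner_map_symm_of_mem_range hsym hc (starProjection_apply_mem _ u) (starProjection_apply_mem _ v)
  refine ⟨c ∘ₗ p + p ∘ₗ c.adjoint - p ∘ₗ c.adjoint ∘ₗ p, fun u v => ?_, ext fun s => ?_⟩
  · simp only [sub_apply, add_apply, comp_apply, inner_sub_left, inner_add_left, inner_sub_right,
      inner_add_right, hp _ v, ← hp u, adjoint_inner_left, adjoint_inner_right, hcp]
    ring
  · simp [hpx, ← LinearMap.congr_fun hc s]

theorem exists_isSymmetric_comp_eq_iff (x y : E →ₗ[𝕜] F) :
    (∃ a : F →ₗ[𝕜] F, a.IsSymmetric ∧ a ∘ₗ x = y) ↔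
      ker x ≤ ker y ∧ (x.adjoint ∘ₗ y).IsSymmetric := by
  refine ⟨?_, fun h => exists_isSymmetric_comp_eq h.1 h.2⟩
  rintro ⟨a, ha, rfl⟩
  exact ⟨ker_le_ker_comp x a, ha.adjoint_conj x⟩

end LinearMap

namespace Matrix

variable {𝕜 ι κ : Type*} [RCLike 𝕜] [Fintype ι] [DecidableEq ι] [Fintype κ] [DecidableEq κ]

theorem exists_isHermitian_mul_eq_iff (X Y : Matrix ι κ 𝕜) :
    (∃ A : Matrix ι ι 𝕜, A.IsHermitian ∧ A * X = Y) ↔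
      ({u | X *ᵥ u = 0} ⊆ {u | Y *ᵥ u = 0} ∧ (Xᴴ * Y).IsHermitian) := by
  have hex : (∃ A : Matrix ι ι 𝕜, A.IsHermitian ∧ A * X = Y) ↔
      ∃ a, a.IsSymmetric ∧ a ∘ₗ X.toEuclideanLin = Y.toEuclideanLin := by
    simp only [toEuclideanLin.surjective.exists, isSymmetric_toEuclideanLin_iff, ← toLpLin_mul,
      toEuclideanLin.injective.eq_iff]
  have hker : LinearMap.ker X.toEuclideanLin ≤ LinearMap.ker Y.toEuclideanLin ↔
      {u | X *ᵥ u = 0} ⊆ {u | Y *ᵥ u = 0} := by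
    simp [SetLike.le_def, Set.subset_def, (WithLp.toLp_surjective 2).forall, toLpLin_toLp]
  have hsym : (Xᴴ * Y).IsHermitian ↔
      (X.toEuclideanLin.adjoint ∘ₗ Y.toEuclideanLin).IsSymmetric := by
    rw [← isSymmetric_toEuclideanLin_iff, toLpLin_mul (q := 2),
      toEuclideanLin_conjTranspose_eq_adjoint]
  rw [hex, LinearMap.exists_isSymmetric_comp_eq_iff, hker, hsym]

end Matrix

theorem stmt_8_general {𝔽 : Type*} [RCLike 𝔽] (m n : ℕ)
    (X Y : Matrix (Fin m) (Fin n) 𝔽) :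
    (∃ A : Matrix (Fin m) (Fin m) 𝔽, A.IsHermitian ∧ A * X = Y) ↔
      ({u : Fin n → 𝔽 | X.mulVec u = 0} ⊆ {u | Y.mulVec u = 0} ∧
        (Xᴴ * Y).IsHermitian) :=
  exists_isHermitian_mul_eq_iff X Y

/-- Hermitian targeting: there is a Hermitian `A` with `A X = Y` iff
`null X ⊆ null Y` and `Xᴴ Y` is Hermitian. -/
theorem stmt_8 {𝔽 : Type*} [RCLike 𝔽] (m n : ℕ) (hn : 0 < n) (hmn : n ≤ m)
    (X Y : Matrix (Fin m) (Fin n) 𝔽) (hX : X ≠ 0) :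
    (∃ A : Matrix (Fin m) (Fin m) 𝔽, A.IsHermitian ∧ A * X = Y) ↔
      ({u : Fin n → 𝔽 | X.mulVec u = 0} ⊆ {u | Y.mulVec u = 0} ∧
        (Xᴴ * Y).IsHermitian) :=
  stmt_8_general m n X Y
end

section
/- Let m, n be positive integers with m ≥ n, let 𝔽 be ℝ or ℂ, and let X, Y be m×n matrices over 𝔽. Suppose 1 ≤ r ≤ n and Y = V Σ Wᴴ, where V (m×m) and W (n×n) are unitary, Σ is the m×n block matrix [[Σ_r, 0], [0, 0]] and Σ_r is an r×r diagonal real matrix with positive diagonal entries. Partition Z = Vᴴ X W conformally to Σ as Z = [[Z₁₁, Z₁₂], [Z₂₁, Z₂₂]] with Z₁₁ of size r×r. Then Xᴴ Y = Yᴴ X if and only if Z₁₂ = 0 and Σ_r Z₁₁ = Z₁₁ᴴ Σ_r. -/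
/-!
Writing `X = V Z Wᴴ` and `Y = V Σ Wᴴ`, unitarity gives `Xᴴ Y = W (Zᴴ Σ) Wᴴ` and
`Yᴴ X = W (Σᴴ Z) Wᴴ`, so `Xᴴ Y = Yᴴ X` iff `Zᴴ Σ = Σᴴ Z`. In block form this reads
`Z₁₁ᴴ Σ_r = Σ_r Z₁₁` and `Σ_r Z₁₂ = 0` (the other two blocks are the conjugate transpose
of the second and `0 = 0`), and `Σ_r` is invertible.
-/

open Matrix

section Unitary

variable {α : Type*} [CommRing α] [StarRing α] {m n : Type*} [Fintype m] [Fintype n]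

theorem conjTranspose_mul_unitary_conj [DecidableEq m] {V : Matrix m m α} (hV : Vᴴ * V = 1)
    (W : Matrix n n α) (A B : Matrix m n α) :
    (Vᴴ * A * W)ᴴ * (Vᴴ * B * W) = Wᴴ * (Aᴴ * B) * W := by
  have hV' : V * Vᴴ = 1 := mul_eq_one_comm.mp hV
  simp only [conjTranspose_mul, conjTranspose_conjTranspose, Matrix.mul_assoc]
  rw [← Matrix.mul_assoc V, hV', Matrix.one_mul]

theorem unitary_conj_inj [DecidableEq n] {W : Matrix n n α} (hW : Wᴴ * W = 1)
    {M N : Matrix n n α} :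
    Wᴴ * M * W = Wᴴ * N * W ↔ M = N := by
  have hW' : W * Wᴴ = 1 := mul_eq_one_comm.mp hW
  refine ⟨fun h => ?_, fun h => h ▸ rfl⟩
  simpa only [Matrix.mul_assoc, hW', Matrix.mul_one, ← Matrix.mul_assoc W, Matrix.one_mul]
    using congrArg (fun P => W * P * Wᴴ) h

theorem conjTranspose_mul_comm_iff_of_unitary [DecidableEq m] [DecidableEq n]
    {V : Matrix m m α} {W : Matrix n n α} (hV : Vᴴ * V = 1) (hW : Wᴴ * W = 1) (A B : Matrix m n α) :
    (Vᴴ * A * W)ᴴ * (Vᴴ * B * W) = (Vᴴ * B * W)ᴴ * (Vᴴ * A * W) ↔ Aᴴ * B = Bᴴ * A := by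
  rw [conjTranspose_mul_unitary_conj hV, conjTranspose_mul_unitary_conj hV, unitary_conj_inj hW]

theorem unitary_conj_cancel [DecidableEq m] [DecidableEq n]
    {V : Matrix m m α} {W : Matrix n n α} (hV : Vᴴ * V = 1) (hW : Wᴴ * W = 1) (S : Matrix m n α) :
    Vᴴ * (V * S * Wᴴ) * W = S := by
  rw [← Matrix.mul_assoc, ← Matrix.mul_assoc, hV, Matrix.one_mul, Matrix.mul_assoc, hW,
    Matrix.mul_one]

end Unitary

theorem conjTranspose_mul_fromBlocks_comm_iff {α : Type*} [CommRing α] [StarRing α]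
    {p q s : Type*} [Fintype p] [DecidableEq p] [Fintype q] [Fintype s]
    (Z : Matrix (p ⊕ q) (p ⊕ s) α) {S : Matrix p p α} (hS : S.IsHermitian)
    (hdet : IsUnit S.det) :
    Zᴴ * (fromBlocks S 0 0 0 : Matrix (p ⊕ q) (p ⊕ s) α) =
        (fromBlocks S 0 0 0 : Matrix (p ⊕ q) (p ⊕ s) α)ᴴ * Z ↔
      Z.toBlocks₁₂ = 0 ∧ S * Z.toBlocks₁₁ = Z.toBlocks₁₁ᴴ * S := by
  obtain ⟨A, B, C, E, rfl⟩ : ∃ A B C E, Z = fromBlocks A B C E :=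
    ⟨_, _, _, _, (fromBlocks_toBlocks Z).symm⟩
  simp only [fromBlocks_conjTranspose, fromBlocks_multiply, hS.eq, conjTranspose_zero,
    Matrix.mul_zero, Matrix.zero_mul, add_zero, fromBlocks_inj, toBlocks_fromBlocks₁₁,
    toBlocks_fromBlocks₁₂]
  constructor
  · rintro ⟨h11, h12, -, -⟩
    refine ⟨?_, h11.symm⟩
    rw [← nonsing_inv_mul_cancel_left S B hdet, ← h12, Matrix.mul_zero]
  · rintro ⟨rfl, h11⟩
    simp only [h11, conjTranspose_zero, Matrix.mul_zero, Matrix.zero_mul, and_self]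

section Diagonal

variable {𝔽 : Type*} [RCLike 𝔽] {n : Type*} [DecidableEq n]

theorem isHermitian_diagonal_ofReal (D : n → ℝ) :
    (diagonal fun i => (D i : 𝔽)).IsHermitian :=
  isHermitian_diagonal_of_self_adjoint _ (funext fun i => RCLike.conj_ofReal (D i))

theorem isUnit_det_diagonal_ofReal [Fintype n] {D : n → ℝ} (hD : ∀ i, D i ≠ 0) :
    IsUnit (diagonal fun i => (D i : 𝔽)).det := by
  rw [det_diagonal, isUnit_iff_ne_zero]
  exact Finset.prod_ne_zero_iff.mpr fun i _ => RCLike.ofReal_ne_zero.mpr (hD i)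

end Diagonal

theorem stmt_10_general {𝔽 : Type*} [RCLike 𝔽] (m n r : ℕ)
    (X Y : Matrix (Fin r ⊕ Fin (m - r)) (Fin r ⊕ Fin (n - r)) 𝔽)
    (V : Matrix (Fin r ⊕ Fin (m - r)) (Fin r ⊕ Fin (m - r)) 𝔽)
    (W : Matrix (Fin r ⊕ Fin (n - r)) (Fin r ⊕ Fin (n - r)) 𝔽)
    (hV : Vᴴ * V = 1) (hW : Wᴴ * W = 1)
    (D : Fin r → ℝ) (hD : ∀ i, 0 < D i)
    (hY : Y = V * (fromBlocks (diagonal fun i => ((D i : ℝ) : 𝔽)) 0 0 0 :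
        Matrix (Fin r ⊕ Fin (m - r)) (Fin r ⊕ Fin (n - r)) 𝔽) * Wᴴ) :
    Xᴴ * Y = Yᴴ * X ↔
      ((Vᴴ * X * W).toBlocks₁₂ = 0 ∧
        diagonal (fun i => ((D i : ℝ) : 𝔽)) * (Vᴴ * X * W).toBlocks₁₁ =
          ((Vᴴ * X * W).toBlocks₁₁)ᴴ * diagonal (fun i => ((D i : ℝ) : 𝔽))) := by
  have hVYW : Vᴴ * Y * W = fromBlocks (diagonal fun i => ((D i : ℝ) : 𝔽)) 0 0 0 := by
    rw [hY, unitary_conj_cancel hV hW]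
  rw [← conjTranspose_mul_comm_iff_of_unitary hV hW, hVYW]
  exact conjTranspose_mul_fromBlocks_comm_iff _ (isHermitian_diagonal_ofReal D)
    (isUnit_det_diagonal_ofReal fun i => (hD i).ne')

/-- With a singular value decomposition `Y = V Σ Wᴴ` (Σ = Σ_r ⊕ 0, Σ_r diagonal positive)
and `Z = Vᴴ X W` partitioned conformally, `Xᴴ Y = Yᴴ X` iff `Z₁₂ = 0` and
`Σ_r Z₁₁ = Z₁₁ᴴ Σ_r`.  Rows are indexed by `Fin r ⊕ Fin (m - r)` and columns by
`Fin r ⊕ Fin (n - r)`, realizing the block partition. -/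
theorem stmt_10 {𝔽 : Type*} [RCLike 𝔽] (m n r : ℕ)
    (hr : 1 ≤ r) (hrn : r ≤ n) (hnm : n ≤ m)
    (X Y : Matrix (Fin r ⊕ Fin (m - r)) (Fin r ⊕ Fin (n - r)) 𝔽)
    (V : Matrix (Fin r ⊕ Fin (m - r)) (Fin r ⊕ Fin (m - r)) 𝔽)
    (W : Matrix (Fin r ⊕ Fin (n - r)) (Fin r ⊕ Fin (n - r)) 𝔽)
    (hV : Vᴴ * V = 1) (hW : Wᴴ * W = 1)
    (D : Fin r → ℝ) (hD : ∀ i, 0 < D i)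
    (hY : Y = V * (fromBlocks (diagonal fun i => ((D i : ℝ) : 𝔽)) 0 0 0 :
        Matrix (Fin r ⊕ Fin (m - r)) (Fin r ⊕ Fin (n - r)) 𝔽) * Wᴴ) :
    Xᴴ * Y = Yᴴ * X ↔
      ((Vᴴ * X * W).toBlocks₁₂ = 0 ∧
        diagonal (fun i => ((D i : ℝ) : 𝔽)) * (Vᴴ * X * W).toBlocks₁₁ =
          ((Vᴴ * X * W).toBlocks₁₁)ᴴ * diagonal (fun i => ((D i : ℝ) : 𝔽))) :=
  stmt_10_general m n r X Y V W hV hW D hD hY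
end

section
/- Let m, n be positive integers with m ≥ n, let 𝔽 be ℝ or ℂ, and let X, Y be m×n matrices over 𝔽. Suppose 1 ≤ r ≤ n and Y = V Σ Wᴴ, where V (m×m) and W (n×n) are unitary, Σ is the m×n block matrix [[Σ_r, 0], [0, 0]] and Σ_r is an r×r diagonal real matrix with positive diagonal entries. Partition Z = Vᴴ X W conformally to Σ as Z = [[Z₁₁, Z₁₂], [Z₂₁, Z₂₂]] with Z₁₁ of size r×r, and let Z₁ be the m×r matrix formed by stacking Z₁₁ over Z₂₁. If Z₁₂ = 0, Σ_r Z₁₁ = Z₁₁ᴴ Σ_r, rank Z₁ = r, and (Z₂₁ · null Z₁₁) ∩ col Z₂₂ = {0}, then there exists a Hermitian m×m matrix A over 𝔽 with A X = Y. -/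
/-!
With `Z = Vᴴ X W` and `Σ = [[Σ_r, 0], [0, 0]]`, a Hermitian `B` with `B Z = Σ` gives the Hermitian
`A = V B Vᴴ` with `A X = Y`. A Hermitian solution of `B Z = S` exists as soon as
`ker Z ⊆ ker S` and `Zᴴ S` is Hermitian: if `Z P Z = Z`, take `B = S P + (S P)ᴴ - Pᴴ Zᴴ S P`.
For the block lower-triangular `Z`, the rank and intersection conditions force every
`u ∈ ker Z` to vanish on its first `r` coordinates, so `ker Z ⊆ ker Σ`, and `Σ_r Z₁₁ = Z₁₁ᴴ Σ_r`
says exactly that `Zᴴ Σ` is Hermitian.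
-/

open Matrix

namespace Matrix

variable {K ι κ : Type*} [Fintype κ]

theorem exists_mul_mul_eq_self [Fintype ι] [Field K] (Z : Matrix ι κ K) :
    ∃ P : Matrix κ ι K, Z * P * Z = Z := by
  classical
  obtain ⟨g, hg⟩ := Z.mulVecLin.rangeRestrict.exists_rightInverse_of_surjective
    (LinearMap.range_rangeRestrict _)
  obtain ⟨e, he⟩ := LinearMap.exists_extend g
  refine ⟨LinearMap.toMatrix' e, ext_iff_mulVec.2 fun v => ?_⟩
  have := congrArg Subtype.val (LinearMap.congr_fun hg ⟨Z *ᵥ v, v, rfl⟩)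
  simpa [← mulVec_mulVec, ← he] using this

theorem mul_eq_zero_of_ker_mulVecLin_le [CommSemiring K] {ι' τ : Type*} [Fintype τ]
    {Z : Matrix ι κ K} {S : Matrix ι' κ K}
    (hker : LinearMap.ker Z.mulVecLin ≤ LinearMap.ker S.mulVecLin) {C : Matrix κ τ K}
    (hC : Z * C = 0) : S * C = 0 :=
  ext_iff_mulVec.2 fun v => by
    have : C *ᵥ v ∈ LinearMap.ker Z.mulVecLin := by simp [mulVec_mulVec, hC]
    simpa [mulVec_mulVec] using hker this

theorem exists_isHermitian_mul_eq [Fintype ι] [Field K] [StarRing K] {Z S : Matrix ι κ K}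
    (hker : LinearMap.ker Z.mulVecLin ≤ LinearMap.ker S.mulVecLin)
    (hZS : (Zᴴ * S).IsHermitian) :
    ∃ B : Matrix ι ι K, B.IsHermitian ∧ B * Z = S := by
  classical
  obtain ⟨P, hP⟩ := Z.exists_mul_mul_eq_self
  have hSPZ : S * P * Z = S := by
    have := mul_eq_zero_of_ker_mulVecLin_le hker (C := P * Z - 1) (by
      rw [Matrix.mul_sub, ← Matrix.mul_assoc, hP, Matrix.mul_one, sub_self])
    rwa [Matrix.mul_sub, Matrix.mul_one, sub_eq_zero, ← Matrix.mul_assoc] at this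
  have hSZ : Zᴴ * S = Sᴴ * Z := by simpa using hZS.eq.symm
  -- `S P Z = S`, and the Hermitian symmetrization overshoots by `Pᴴ Sᴴ Z = Pᴴ Zᴴ S P Z`.
  refine ⟨S * P + (S * P)ᴴ - Pᴴ * (Zᴴ * S) * P,
    (isHermitian_add_transpose_self _).sub (isHermitian_conjTranspose_mul_mul P hZS), ?_⟩
  calc (S * P + (S * P)ᴴ - Pᴴ * (Zᴴ * S) * P) * Z
      = S * P * Z + Pᴴ * (Sᴴ * Z) - Pᴴ * (Sᴴ * (Z * P * Z)) := by
        simp only [Matrix.sub_mul, Matrix.add_mul, conjTranspose_mul, hSZ, Matrix.mul_assoc]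
    _ = S := by rw [hP, hSPZ, add_sub_cancel_right]

theorem mulVec_injective_of_rank_eq_card [Field K] {M : Matrix ι κ K}
    (h : M.rank = Fintype.card κ) : Function.Injective M.mulVec := by
  rw [mulVec_injective_iff, linearIndependent_iff_card_eq_finrank_span, ← h,
    rank_eq_finrank_span_cols]
  rfl

variable {R m₁ m₂ n₁ n₂ : Type*}

theorem ker_mulVecLin_fromBlocks_le [Fintype n₁] [Fintype n₂] [CommRing R]
    {A : Matrix m₁ n₁ R} {C : Matrix m₂ n₁ R} {D : Matrix m₂ n₂ R}
    (hAC : Function.Injective (fromRows A C).mulVec)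
    (hCD : C.mulVec '' {v | A *ᵥ v = 0} ∩ Set.range D.mulVec = {0})
    (E : Matrix m₁ n₁ R) (F : Matrix m₂ n₁ R) :
    LinearMap.ker (fromBlocks A 0 C D).mulVecLin ≤
      LinearMap.ker (fromBlocks E 0 F 0).mulVecLin := by
  intro u hu
  simp only [LinearMap.mem_ker, mulVecLin_apply, fromBlocks_mulVec, zero_mulVec, add_zero,
    ← Sum.elim_zero_zero, Sum.elim_eq_iff] at hu ⊢
  obtain ⟨hAu, hCDu⟩ := hu
  have hC : C *ᵥ (u ∘ Sum.inl) = 0 := by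
    have : C *ᵥ (u ∘ Sum.inl) ∈ C.mulVec '' {v | A *ᵥ v = 0} ∩ Set.range D.mulVec :=
      ⟨⟨_, hAu, rfl⟩, -(u ∘ Sum.inr), by rw [mulVec_neg, neg_eq_of_add_eq_zero_left hCDu]⟩
    simpa [hCD] using this
  have hu₁ : u ∘ Sum.inl = 0 := hAC (by simp [fromRows_mulVec, hAu, hC])
  simp [hu₁]

theorem isHermitian_conjTranspose_fromBlocks_mul_fromBlocks [CommSemiring R] [StarRing R]
    [Fintype m₁] [Fintype m₂] {A E : Matrix m₁ n₁ R} {C : Matrix m₂ n₁ R} {D : Matrix m₂ n₂ R}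
    (h : Eᴴ * A = Aᴴ * E) :
    ((fromBlocks A 0 C D)ᴴ *
      (fromBlocks E 0 0 0 : Matrix (m₁ ⊕ m₂) (n₁ ⊕ n₂) R)).IsHermitian := by
  rw [fromBlocks_conjTranspose, fromBlocks_multiply]
  simp [IsHermitian, fromBlocks_conjTranspose, h]

end Matrix

theorem stmt_11_general {𝔽 : Type*} [RCLike 𝔽] (m n r : ℕ)
    (X Y : Matrix (Fin r ⊕ Fin (m - r)) (Fin r ⊕ Fin (n - r)) 𝔽)
    (V : Matrix (Fin r ⊕ Fin (m - r)) (Fin r ⊕ Fin (m - r)) 𝔽)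
    (W : Matrix (Fin r ⊕ Fin (n - r)) (Fin r ⊕ Fin (n - r)) 𝔽)
    (hW : Wᴴ * W = 1)
    (D : Fin r → ℝ)
    (hY : Y = V * (fromBlocks (diagonal fun i => ((D i : ℝ) : 𝔽)) 0 0 0 :
        Matrix (Fin r ⊕ Fin (m - r)) (Fin r ⊕ Fin (n - r)) 𝔽) * Wᴴ)
    (h12 : (Vᴴ * X * W).toBlocks₁₂ = 0)
    (h11 : diagonal (fun i => ((D i : ℝ) : 𝔽)) * (Vᴴ * X * W).toBlocks₁₁ =
      ((Vᴴ * X * W).toBlocks₁₁)ᴴ * diagonal (fun i => ((D i : ℝ) : 𝔽)))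
    (hrank : (fromRows (Vᴴ * X * W).toBlocks₁₁ (Vᴴ * X * W).toBlocks₂₁).rank = r)
    (hint : ((Vᴴ * X * W).toBlocks₂₁.mulVec ''
          {u : Fin r → 𝔽 | (Vᴴ * X * W).toBlocks₁₁.mulVec u = 0}) ∩
        Set.range (Vᴴ * X * W).toBlocks₂₂.mulVec = {0}) :
    ∃ A : Matrix (Fin r ⊕ Fin (m - r)) (Fin r ⊕ Fin (m - r)) 𝔽,
      A.IsHermitian ∧ A * X = Y := by
  set Z := Vᴴ * X * W with hZ
  set S₁ : Matrix (Fin r) (Fin r) 𝔽 := diagonal fun i => ((D i : ℝ) : 𝔽)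
  have hZ_blocks : fromBlocks Z.toBlocks₁₁ 0 Z.toBlocks₂₁ Z.toBlocks₂₂ = Z := by
    rw [← h12, fromBlocks_toBlocks]
  have hS₁ : S₁ᴴ = S₁ := (isHermitian_diagonal_iff.2 fun i => RCLike.conj_ofReal (D i)).eq
  have hker := ker_mulVecLin_fromBlocks_le
    (mulVec_injective_of_rank_eq_card (by simpa using hrank)) hint S₁ 0
  have h11' : S₁ᴴ * Z.toBlocks₁₁ = Z.toBlocks₁₁ᴴ * S₁ := by rwa [hS₁]
  have hherm := isHermitian_conjTranspose_fromBlocks_mul_fromBlocks (C := Z.toBlocks₂₁)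
    (D := Z.toBlocks₂₂) h11'
  rw [hZ_blocks] at hker hherm
  obtain ⟨B, hB, hBZ⟩ := exists_isHermitian_mul_eq hker hherm
  refine ⟨V * B * Vᴴ, isHermitian_mul_mul_conjTranspose V hB, ?_⟩
  calc V * B * Vᴴ * X = V * (B * Z) * Wᴴ := by
        simp only [hZ, Matrix.mul_assoc, mul_eq_one_comm.mp hW, Matrix.mul_one]
    _ = Y := by rw [hBZ, hY]

/-- With a singular value decomposition `Y = V Σ Wᴴ` (Σ = Σ_r ⊕ 0, Σ_r diagonal positive)
and `Z = Vᴴ X W` partitioned conformally: if `Z₁₂ = 0`, `Σ_r Z₁₁ = Z₁₁ᴴ Σ_r`,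
`rank [Z₁₁; Z₂₁] = r`, and `(Z₂₁ · null Z₁₁) ∩ col Z₂₂ = {0}`, then there is a
Hermitian `A` with `A X = Y`. -/
theorem stmt_11 {𝔽 : Type*} [RCLike 𝔽] (m n r : ℕ)
    (hr : 1 ≤ r) (hrn : r ≤ n) (hnm : n ≤ m)
    (X Y : Matrix (Fin r ⊕ Fin (m - r)) (Fin r ⊕ Fin (n - r)) 𝔽)
    (V : Matrix (Fin r ⊕ Fin (m - r)) (Fin r ⊕ Fin (m - r)) 𝔽)
    (W : Matrix (Fin r ⊕ Fin (n - r)) (Fin r ⊕ Fin (n - r)) 𝔽)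
    (hV : Vᴴ * V = 1) (hW : Wᴴ * W = 1)
    (D : Fin r → ℝ) (hD : ∀ i, 0 < D i)
    (hY : Y = V * (fromBlocks (diagonal fun i => ((D i : ℝ) : 𝔽)) 0 0 0 :
        Matrix (Fin r ⊕ Fin (m - r)) (Fin r ⊕ Fin (n - r)) 𝔽) * Wᴴ)
    (h12 : (Vᴴ * X * W).toBlocks₁₂ = 0)
    (h11 : diagonal (fun i => ((D i : ℝ) : 𝔽)) * (Vᴴ * X * W).toBlocks₁₁ =
      ((Vᴴ * X * W).toBlocks₁₁)ᴴ * diagonal (fun i => ((D i : ℝ) : 𝔽)))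
    (hrank : (fromRows (Vᴴ * X * W).toBlocks₁₁ (Vᴴ * X * W).toBlocks₂₁).rank = r)
    (hint : ((Vᴴ * X * W).toBlocks₂₁.mulVec ''
          {u : Fin r → 𝔽 | (Vᴴ * X * W).toBlocks₁₁.mulVec u = 0}) ∩
        Set.range (Vᴴ * X * W).toBlocks₂₂.mulVec = {0}) :
    ∃ A : Matrix (Fin r ⊕ Fin (m - r)) (Fin r ⊕ Fin (m - r)) 𝔽,
      A.IsHermitian ∧ A * X = Y :=
  stmt_11_general m n r X Y V W hW D hY h12 h11 hrank hint
end

section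
/- Let m, n be positive integers with m ≥ n, let 𝔽 be ℝ or ℂ, and let X, Y be m×n matrices over 𝔽 with X ≠ 0. There exists a positive semidefinite m×m matrix A over 𝔽 with A X = Y if and only if Xᴴ Y is positive semidefinite and null Y = null (Xᴴ Y). -/
/-!
If `A ⪰ 0` then `Xᴴ A X ⪰ 0`, and `uᴴ Xᴴ A X u = 0` forces `A X u = 0`, so `Y = A X` and `Xᴴ Y`
have the same null space. Conversely, let `M = Xᴴ Y ⪰ 0` and let `N ⪰ 0` be a generalized inverse
of `M`, i.e. `M N M = M`: `N = cfc (·⁻¹) M` is the Moore–Penrose inverse, as `0⁻¹ = 0`.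
Since `null M ⊆ null Y`, also `Y N M = Y`, and `A = Y N Yᴴ` is positive semidefinite with
`A X = Y N M = Y`.
-/

open Matrix
open scoped ComplexOrder MatrixOrder

namespace Matrix

theorem mul_mul_eq_self_of_mulVec_eq_zero {R m n : Type*} [Ring R] [Fintype n]
    {Y : Matrix m n R} {M N : Matrix n n R} (hker : ∀ u, M *ᵥ u = 0 → Y *ᵥ u = 0)
    (hMNM : M * N * M = M) : Y * N * M = Y := by
  refine ext_iff_mulVec.mpr fun u => ?_
  have hMu : M *ᵥ (u - (N * M) *ᵥ u) = 0 := by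
    rw [mulVec_sub, mulVec_mulVec, ← Matrix.mul_assoc, hMNM, sub_self]
  have hYu := hker _ hMu
  rw [mulVec_sub, sub_eq_zero, mulVec_mulVec] at hYu
  rw [hYu, Matrix.mul_assoc]

variable {𝕜 m n : Type*} [RCLike 𝕜] [Fintype m] [Fintype n]

theorem PosSemidef.conjTranspose_mul_mul_mulVec_eq_zero_iff {A : Matrix m m 𝕜}
    (hA : A.PosSemidef) (X : Matrix m n 𝕜) (u : n → 𝕜) :
    (Xᴴ * A * X) *ᵥ u = 0 ↔ (A * X) *ᵥ u = 0 := by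
  constructor
  · intro h
    have hquad : star (X *ᵥ u) ⬝ᵥ A *ᵥ (X *ᵥ u) = 0 := by
      simpa only [dotProduct_zero, Matrix.mul_assoc, ← mulVec_mulVec, dotProduct_mulVec,
        vecMul_conjTranspose, star_star] using congrArg (star u ⬝ᵥ ·) h
    rw [← mulVec_mulVec]
    exact (hA.dotProduct_mulVec_zero_iff _).mp hquad
  · intro h
    rw [Matrix.mul_assoc, ← mulVec_mulVec, h, mulVec_zero]

theorem PosSemidef.exists_posSemidef_mul_mul_self [DecidableEq n] {M : Matrix n n 𝕜}
    (hM : M.PosSemidef) : ∃ N : Matrix n n 𝕜, N.PosSemidef ∧ M * N * M = M := by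
  have hcont (f : ℝ → ℝ) : ContinuousOn f (spectrum ℝ M) := M.finite_real_spectrum.continuousOn f
  refine ⟨cfc (·⁻¹ : ℝ → ℝ) M, (cfc_nonneg fun x hx => ?_).posSemidef, ?_⟩
  · exact inv_nonneg.mpr (spectrum_nonneg_of_nonneg hM.nonneg hx)
  · calc M * cfc (·⁻¹ : ℝ → ℝ) M * M = cfc (fun x : ℝ => x * x⁻¹ * x) M := by
          rw [cfc_mul (fun x : ℝ => x * x⁻¹) (fun x => x) M (hcont _) (hcont _),
            cfc_mul (fun x : ℝ => x) (·⁻¹) M (hcont _) (hcont _), cfc_id' ℝ M]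
      _ = M := by simp only [mul_inv_mul_cancel]; exact cfc_id' ℝ M

end Matrix

theorem stmt_12_general {𝔽 : Type*} [RCLike 𝔽] (m n : ℕ)
    (X Y : Matrix (Fin m) (Fin n) 𝔽) :
    (∃ A : Matrix (Fin m) (Fin m) 𝔽, A.PosSemidef ∧ A * X = Y) ↔
      ((Xᴴ * Y).PosSemidef ∧
        {u : Fin n → 𝔽 | Y.mulVec u = 0} = {u | (Xᴴ * Y).mulVec u = 0}) := by
  constructor
  · rintro ⟨A, hA, rfl⟩
    rw [← Matrix.mul_assoc]
    exact ⟨hA.conjTranspose_mul_mul_same X,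
      Set.ext fun u => (hA.conjTranspose_mul_mul_mulVec_eq_zero_iff X u).symm⟩
  · rintro ⟨hM, hnull⟩
    obtain ⟨N, hN, hMNM⟩ := hM.exists_posSemidef_mul_mul_self
    have hYX : Yᴴ * X = Xᴴ * Y := by
      rw [← hM.isHermitian.eq, conjTranspose_mul, conjTranspose_conjTranspose]
    refine ⟨Y * N * Yᴴ, hN.mul_mul_conjTranspose_same Y, ?_⟩
    rw [Matrix.mul_assoc (Y * N), hYX]
    exact mul_mul_eq_self_of_mulVec_eq_zero (fun u hu => (Set.ext_iff.mp hnull u).mpr hu) hMNM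

/-- Positive semidefinite targeting: there is a positive semidefinite `A` with
`A X = Y` iff `Xᴴ Y` is positive semidefinite and `null Y = null (Xᴴ Y)`. -/
theorem stmt_12 {𝔽 : Type*} [RCLike 𝔽] (m n : ℕ) (hn : 0 < n) (hmn : n ≤ m)
    (X Y : Matrix (Fin m) (Fin n) 𝔽) (hX : X ≠ 0) :
    (∃ A : Matrix (Fin m) (Fin m) 𝔽, A.PosSemidef ∧ A * X = Y) ↔
      ((Xᴴ * Y).PosSemidef ∧
        {u : Fin n → 𝔽 | Y.mulVec u = 0} = {u | (Xᴴ * Y).mulVec u = 0}) :=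
  stmt_12_general m n X Y
end

section
/- Let m, n be positive integers with m ≥ n, let 𝔽 be ℝ or ℂ, and let X, Y be m×n matrices over 𝔽 with X ≠ 0. There exists a positive definite m×m matrix A over 𝔽 with A X = Y if and only if Xᴴ Y is positive semidefinite, null Y = null (Xᴴ Y), and rank Y = rank X. -/
/-!
If `A` is positive definite then `Xᴴ (A X)` is positive semidefinite with the same kernel as `X`,
and `A` is invertible. Conversely, the hypotheses force `Yᴴ X = Xᴴ Y =: M` and
`ker X = ker Y = ker M`. Take a positive semidefinite generalized inverse `N` of `M` and the
orthogonal projection `Q` onto the orthogonal complement of the range of `X`; then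
`A = Y N Yᴴ + Q` satisfies `A X = Y N M = Y`, and a vector `x` killed by both summands is some
`X c` with `M c = Xᴴ (Y N Yᴴ) X c = 0`, hence `x = X c = 0`.
-/

open Matrix
open LinearMap (ker range)
open scoped ComplexOrder MatrixOrder

namespace Matrix

section Field

variable {K : Type*} [Field K] {l m n : Type*} [Fintype l] [Fintype n]

theorem mul_mul_eq_self_of_ker_le [DecidableEq n] {M : Matrix l n K} {N : Matrix n l K}
    {Y : Matrix m n K} (hMNM : M * N * M = M) (hker : ker M.mulVecLin ≤ ker Y.mulVecLin) :
    Y * N * M = Y := by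
  have hB : Y * (N * M - 1) = 0 := mulVec_injective <| funext fun v => by
    have hv : M *ᵥ ((N * M - 1) *ᵥ v) = 0 := by
      rw [mulVec_mulVec, Matrix.mul_sub, ← Matrix.mul_assoc, hMNM, Matrix.mul_one, sub_self,
        zero_mulVec]
    simpa [mulVec_mulVec] using hker hv
  rwa [Matrix.mul_sub, Matrix.mul_one, sub_eq_zero, ← Matrix.mul_assoc] at hB

theorem ker_mulVecLin_eq_of_le_of_rank_eq {X Y : Matrix m n K}
    (hle : ker X.mulVecLin ≤ ker Y.mulVecLin) (hrank : Y.rank = X.rank) :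
    ker X.mulVecLin = ker Y.mulVecLin := by
  refine Submodule.eq_of_le_of_finrank_eq hle ?_
  have hX := LinearMap.finrank_range_add_finrank_ker X.mulVecLin
  have hY := LinearMap.finrank_range_add_finrank_ker Y.mulVecLin
  rw [rank, rank] at hrank
  omega

end Field

variable {𝔽 : Type*} [RCLike 𝔽] {m n : Type*} [Fintype m] [Fintype n]

/-- `N` is the Moore–Penrose inverse of `M`: the functional calculus with `x ↦ x⁻¹`, where
`0⁻¹ = 0`. -/
theorem PosSemidef.exists_posSemidef_mul_mul_eq_self [DecidableEq n] {M : Matrix n n 𝔽}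
    (hM : M.PosSemidef) : ∃ N : Matrix n n 𝔽, N.PosSemidef ∧ M * N * M = M := by
  have hM₀ : 0 ≤ M := nonneg_iff_posSemidef.mpr hM
  have hcont : ContinuousOn (·⁻¹) (spectrum ℝ M) := M.finite_real_spectrum.continuousOn _
  refine ⟨cfc (·⁻¹ : ℝ → ℝ) M, nonneg_iff_posSemidef.mp <|
    cfc_nonneg fun x hx => inv_nonneg.mpr (spectrum_nonneg_of_nonneg hM₀ hx), ?_⟩
  nth_rw 1 3 [← cfc_id' ℝ M]
  rw [← cfc_mul .., ← cfc_mul ..]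
  simp only [mul_inv_mul_cancel]
  exact cfc_id' ℝ M

theorem PosSemidef.posDef_add_of_disjoint_ker {A B : Matrix n n 𝔽} (hA : A.PosSemidef)
    (hB : B.PosSemidef) (hAB : Disjoint (ker A.mulVecLin) (ker B.mulVecLin)) :
    (A + B).PosDef := by
  refine .of_dotProduct_mulVec_pos (hA.isHermitian.add hB.isHermitian) fun x hx => ?_
  have hA₀ := hA.dotProduct_mulVec_nonneg x
  have hB₀ := hB.dotProduct_mulVec_nonneg x
  rw [add_mulVec, dotProduct_add]
  refine (add_nonneg hA₀ hB₀).lt_of_ne fun h => hx ?_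
  obtain ⟨hAx, hBx⟩ := (add_eq_zero_iff_of_nonneg hA₀ hB₀).mp h.symm
  exact Submodule.disjoint_def.mp hAB x ((hA.dotProduct_mulVec_zero_iff x).mp hAx)
    ((hB.dotProduct_mulVec_zero_iff x).mp hBx)

/-- `Q` is the orthogonal projection onto the orthogonal complement of the range of `X`. -/
theorem exists_posSemidef_mul_eq_zero_ker_le_range [DecidableEq m] [DecidableEq n]
    (X : Matrix m n 𝔽) :
    ∃ Q : Matrix m m 𝔽, Q.PosSemidef ∧ Q * X = 0 ∧ ker Q.mulVecLin ≤ range X.mulVecLin := by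
  obtain ⟨G, hG, hXXG⟩ := (posSemidef_conjTranspose_mul_self X).exists_posSemidef_mul_mul_eq_self
  have hXG : X * G * (Xᴴ * X) = X :=
    mul_mul_eq_self_of_ker_le hXXG (ker_mulVecLin_conjTranspose_mul_self X).le
  set P := X * G * Xᴴ
  have hPX : P * X = X := by simpa only [P, Matrix.mul_assoc] using hXG
  have hP : IsStarProjection P := by
    refine ⟨?_, ?_⟩
    · calc P * P = P * X * (G * Xᴴ) := by simp only [P, Matrix.mul_assoc]
        _ = P := by rw [hPX, ← Matrix.mul_assoc]
    · simp only [P, IsSelfAdjoint, star_eq_conjTranspose, conjTranspose_mul,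
        conjTranspose_conjTranspose, hG.isHermitian.eq, Matrix.mul_assoc]
  refine ⟨1 - P, nonneg_iff_posSemidef.mp hP.one_sub.nonneg,
    by rw [Matrix.sub_mul, Matrix.one_mul, hPX, sub_self], fun x hx => ⟨(G * Xᴴ) *ᵥ x, ?_⟩⟩
  rw [LinearMap.mem_ker, mulVecLin_apply, sub_mulVec, one_mulVec, sub_eq_zero] at hx
  rw [mulVecLin_apply, mulVec_mulVec, ← Matrix.mul_assoc]
  exact hx.symm

theorem PosDef.ker_mulVecLin_conjTranspose_mul_mul_same {A : Matrix m m 𝔽} (hA : A.PosDef)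
    (X : Matrix m n 𝔽) : ker (Xᴴ * A * X).mulVecLin = ker X.mulVecLin := by
  refine le_antisymm (fun u hu => ?_) fun u hu => ?_
  · by_contra hXu
    simp only [LinearMap.mem_ker, mulVecLin_apply] at hu hXu
    have hpos := hA.dotProduct_mulVec_pos hXu
    rw [star_mulVec, ← dotProduct_mulVec, mulVec_mulVec, mulVec_mulVec, hu,
      dotProduct_zero] at hpos
    exact hpos.false
  · rw [LinearMap.mem_ker, mulVecLin_apply] at hu ⊢
    rw [← mulVec_mulVec, hu, mulVec_zero]

theorem ker_mulVecLin_mul_of_isUnit_det [DecidableEq m] {A : Matrix m m 𝔽} (hA : IsUnit A.det)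
    (X : Matrix m n 𝔽) : ker (A * X).mulVecLin = ker X.mulVecLin := by
  rw [mulVecLin_mul, LinearMap.ker_comp_of_ker_eq_bot]
  exact LinearMap.ker_eq_bot.mpr (mulVec_injective_of_isUnit ((isUnit_iff_isUnit_det A).mpr hA))

theorem exists_posDef_mul_eq [DecidableEq m] [DecidableEq n] {X Y : Matrix m n 𝔽}
    (hM : (Xᴴ * Y).PosSemidef) (hker : ker Y.mulVecLin = ker (Xᴴ * Y).mulVecLin)
    (hrank : Y.rank = X.rank) : ∃ A : Matrix m m 𝔽, A.PosDef ∧ A * X = Y := by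
  have hYX : Yᴴ * X = Xᴴ * Y := by simpa using hM.isHermitian.eq
  have hXY : ker X.mulVecLin = ker Y.mulVecLin := by
    refine ker_mulVecLin_eq_of_le_of_rank_eq (fun v hv => ?_) hrank
    rw [LinearMap.mem_ker, mulVecLin_apply] at hv
    rw [hker, LinearMap.mem_ker, mulVecLin_apply, ← hYX, ← mulVec_mulVec, hv, mulVec_zero]
  obtain ⟨N, hN, hMNM⟩ := hM.exists_posSemidef_mul_mul_eq_self
  have hYNM : Y * N * (Xᴴ * Y) = Y := mul_mul_eq_self_of_ker_le hMNM hker.ge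
  obtain ⟨Q, hQ, hQX, hQker⟩ := exists_posSemidef_mul_eq_zero_ker_le_range X
  refine ⟨Y * N * Yᴴ + Q, (hN.mul_mul_conjTranspose_same Y).posDef_add_of_disjoint_ker hQ ?_, ?_⟩
  · refine Submodule.disjoint_def.mpr fun x hx hQx => ?_
    obtain ⟨c, rfl⟩ := hQker hQx
    have hc : c ∈ ker (Xᴴ * Y).mulVecLin := by
      simp only [LinearMap.mem_ker, mulVecLin_apply] at hx ⊢
      calc (Xᴴ * Y) *ᵥ c = (Xᴴ * Y * N * (Yᴴ * X)) *ᵥ c := by rw [hYX, hMNM]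
        _ = Xᴴ *ᵥ ((Y * N * Yᴴ) *ᵥ (X *ᵥ c)) := by simp only [mulVec_mulVec, Matrix.mul_assoc]
        _ = 0 := by rw [hx, mulVec_zero]
    rw [← hker, ← hXY] at hc
    exact hc
  · rw [Matrix.add_mul, hQX, add_zero, Matrix.mul_assoc _ Yᴴ, hYX, hYNM]

end Matrix

theorem stmt_13_general {𝔽 : Type*} [RCLike 𝔽] (m n : ℕ)
    (X Y : Matrix (Fin m) (Fin n) 𝔽) :
    (∃ A : Matrix (Fin m) (Fin m) 𝔽, A.PosDef ∧ A * X = Y) ↔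
      ((Xᴴ * Y).PosSemidef ∧
        {u : Fin n → 𝔽 | Y.mulVec u = 0} = {u | (Xᴴ * Y).mulVec u = 0} ∧
        Y.rank = X.rank) := by
  have hset (Z : Matrix (Fin m) (Fin n) 𝔽) (W : Matrix (Fin n) (Fin n) 𝔽) :
      {u | Z *ᵥ u = 0} = {u | W *ᵥ u = 0} ↔ ker Z.mulVecLin = ker W.mulVecLin :=
    SetLike.coe_set_eq (p := ker Z.mulVecLin) (q := ker W.mulVecLin)
  rw [hset]
  constructor
  · rintro ⟨A, hA, rfl⟩
    have hdet : IsUnit A.det := hA.det_pos.ne'.isUnit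
    refine ⟨by simpa only [Matrix.mul_assoc] using hA.posSemidef.conjTranspose_mul_mul_same X,
      ?_, rank_mul_eq_right_of_isUnit_det A X hdet⟩
    rw [← Matrix.mul_assoc, hA.ker_mulVecLin_conjTranspose_mul_mul_same,
      ker_mulVecLin_mul_of_isUnit_det hdet]
  · rintro ⟨hM, hker, hrank⟩
    exact exists_posDef_mul_eq hM hker hrank

/-- Positive definite targeting: there is a positive definite `A` with `A X = Y` iff
`Xᴴ Y` is positive semidefinite, `null Y = null (Xᴴ Y)`, and `rank Y = rank X`. -/
theorem stmt_13 {𝔽 : Type*} [RCLike 𝔽] (m n : ℕ) (hn : 0 < n) (hmn : n ≤ m)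
    (X Y : Matrix (Fin m) (Fin n) 𝔽) (hX : X ≠ 0) :
    (∃ A : Matrix (Fin m) (Fin m) 𝔽, A.PosDef ∧ A * X = Y) ↔
      ((Xᴴ * Y).PosSemidef ∧
        {u : Fin n → 𝔽 | Y.mulVec u = 0} = {u | (Xᴴ * Y).mulVec u = 0} ∧
        Y.rank = X.rank) :=
  stmt_13_general m n X Y
end

section
/- Let m, n be positive integers with m ≥ n, let 𝔽 be ℝ or ℂ, and let X, Y be m×n matrices over 𝔽 with rank X = n. There exists a positive definite m×m matrix A over 𝔽 with A X = Y if and only if Xᴴ Y is positive definite. -/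
/-!
Necessity: `Xᴴ Y = Xᴴ A X` is positive definite because `X` is injective.
Sufficiency: with `T = Xᴴ Y` and `P = X (Xᴴ X)⁻¹ Xᴴ` the orthogonal projection onto the column
space of `X`, take `A = Y T⁻¹ Yᴴ + (1 - P)`. Then `A X = Y + X - X = Y`, and `A` is the sum of two
positive semidefinite matrices with no common kernel: if `(1 - P) u = 0` then `u = X w`, and if
moreover `Y T⁻¹ Yᴴ u = 0` then `0 = Yᴴ u = Yᴴ X w = T w`, so `w = 0`.
-/

open Matrix
open scoped ComplexOrder MatrixOrder

theorem Matrix.mulVec_injective_of_rank_eq_card_s14 {K m n : Type*} [Field K] [Fintype n]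
    {X : Matrix m n K} (hX : X.rank = Fintype.card n) : Function.Injective X.mulVec :=
  mulVec_injective_iff.mpr <| linearIndependent_iff_card_eq_finrank_span.mpr <| by
    rw [← hX, rank_eq_finrank_span_cols, Set.finrank]

theorem Matrix.PosSemidef.add_posDef_of_ker {𝕜 n : Type*} [RCLike 𝕜] [Fintype n]
    {A B : Matrix n n 𝕜} (hA : A.PosSemidef) (hB : B.PosSemidef)
    (hker : ∀ u, A *ᵥ u = 0 → B *ᵥ u = 0 → u = 0) : (A + B).PosDef := by
  refine .of_dotProduct_mulVec_pos (hA.isHermitian.add hB.isHermitian) fun u hu => ?_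
  have hA0 := hA.dotProduct_mulVec_nonneg u
  have hB0 := hB.dotProduct_mulVec_nonneg u
  rw [add_mulVec, dotProduct_add]
  refine (add_nonneg hA0 hB0).lt_of_ne fun h => hu ?_
  obtain ⟨hAu, hBu⟩ := (add_eq_zero_iff_of_nonneg hA0 hB0).mp h.symm
  exact hker u ((hA.dotProduct_mulVec_zero_iff u).mp hAu) ((hB.dotProduct_mulVec_zero_iff u).mp hBu)

theorem Matrix.isStarProjection_mul_inv_mul_conjTranspose {R m n : Type*} [CommRing R]
    [StarRing R] [Fintype m] [Fintype n] [DecidableEq n] {X : Matrix m n R}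
    (hX : IsUnit (Xᴴ * X).det) : IsStarProjection (X * (Xᴴ * X)⁻¹ * Xᴴ) where
  isIdempotentElem :=
    calc X * (Xᴴ * X)⁻¹ * Xᴴ * (X * (Xᴴ * X)⁻¹ * Xᴴ)
        = X * ((Xᴴ * X)⁻¹ * (Xᴴ * X)) * (Xᴴ * X)⁻¹ * Xᴴ := by simp only [Matrix.mul_assoc]
      _ = X * (Xᴴ * X)⁻¹ * Xᴴ := by rw [nonsing_inv_mul _ hX, Matrix.mul_one]
  isSelfAdjoint := by
    simp only [IsSelfAdjoint, star_eq_conjTranspose, conjTranspose_mul, conjTranspose_nonsing_inv,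
      conjTranspose_conjTranspose, Matrix.mul_assoc]

section

variable {𝕜 m n : Type*} [RCLike 𝕜] [Fintype m] [Fintype n] [DecidableEq m] [DecidableEq n]

theorem Matrix.exists_posDef_mul_eq_of_posDef {X Y : Matrix m n 𝕜}
    (hX : Function.Injective X.mulVec) (hXY : (Xᴴ * Y).PosDef) :
    ∃ A : Matrix m m 𝕜, A.PosDef ∧ A * X = Y := by
  set S := Xᴴ * X
  set T := Xᴴ * Y
  have hS : IsUnit S.det :=
    (isUnit_iff_isUnit_det S).mp (PosDef.conjTranspose_mul_self X hX).isUnit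
  have hT : IsUnit T.det := (isUnit_iff_isUnit_det T).mp hXY.isUnit
  have hYX : Yᴴ * X = T := by
    rw [← hXY.isHermitian.eq, conjTranspose_mul, conjTranspose_conjTranspose]
  refine ⟨Y * T⁻¹ * Yᴴ + (1 - X * S⁻¹ * Xᴴ), ?_, ?_⟩
  · refine (hXY.inv.posSemidef.mul_mul_conjTranspose_same Y).add_posDef_of_ker
      (isStarProjection_mul_inv_mul_conjTranspose hS).one_sub_nonneg.posSemidef fun u hM hP => ?_
    have hYu : Yᴴ *ᵥ u = 0 := by
      simpa [T, mulVec_mulVec, ← Matrix.mul_assoc, mul_nonsing_inv _ hT] using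
        congrArg (Xᴴ *ᵥ ·) hM
    set w := S⁻¹ *ᵥ (Xᴴ *ᵥ u)
    have hu : u = X *ᵥ w := by
      rw [sub_mulVec, one_mulVec, sub_eq_zero] at hP
      simpa only [w, mulVec_mulVec, Matrix.mul_assoc] using hP
    have hTw : T *ᵥ w = 0 := by rw [← hYX, ← mulVec_mulVec, ← hu, hYu]
    rw [hu, (mulVec_injective_of_isUnit hXY.isUnit).eq_iff' (mulVec_zero T) |>.mp hTw,
      mulVec_zero]
  · rw [Matrix.add_mul, Matrix.sub_mul, Matrix.one_mul, Matrix.mul_assoc _ Yᴴ, hYX,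
      Matrix.mul_assoc, nonsing_inv_mul _ hT, Matrix.mul_one, Matrix.mul_assoc _ Xᴴ,
      Matrix.mul_assoc, nonsing_inv_mul _ hS, Matrix.mul_one, sub_self, add_zero]

theorem Matrix.exists_posDef_mul_eq_iff {X Y : Matrix m n 𝕜}
    (hX : Function.Injective X.mulVec) :
    (∃ A : Matrix m m 𝕜, A.PosDef ∧ A * X = Y) ↔ (Xᴴ * Y).PosDef := by
  refine ⟨?_, exists_posDef_mul_eq_of_posDef hX⟩
  rintro ⟨A, hA, rfl⟩
  simpa only [Matrix.mul_assoc] using hA.conjTranspose_mul_mul_same hX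

end

theorem stmt_14_general {𝔽 : Type*} [RCLike 𝔽] (m n : ℕ)
    (X Y : Matrix (Fin m) (Fin n) 𝔽) (hX : X.rank = n) :
    (∃ A : Matrix (Fin m) (Fin m) 𝔽, A.PosDef ∧ A * X = Y) ↔ (Xᴴ * Y).PosDef :=
  exists_posDef_mul_eq_iff (mulVec_injective_of_rank_eq_card_s14 (by rwa [Fintype.card_fin]))

/-- If `X` has full column rank, there is a positive definite `A` with `A X = Y` iff
`Xᴴ Y` is positive definite. -/
theorem stmt_14 {𝔽 : Type*} [RCLike 𝔽] (m n : ℕ) (hn : 0 < n) (hmn : n ≤ m)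
    (X Y : Matrix (Fin m) (Fin n) 𝔽) (hX : X.rank = n) :
    (∃ A : Matrix (Fin m) (Fin m) 𝔽, A.PosDef ∧ A * X = Y) ↔ (Xᴴ * Y).PosDef :=
  stmt_14_general m n X Y hX
end

section
/- Let m, n be positive integers with m ≥ n, let 𝔽 be ℝ or ℂ, and let X, Y be m×n matrices over 𝔽 with rank Y ≥ 1. There exists a reflection m×m matrix A over 𝔽 (i.e., A is Hermitian and A² = I) with A X = Y if and only if Xᴴ Y is Hermitian and Xᴴ X = Yᴴ Y. -/
/-!
Necessity is immediate from `Aᴴ = A` and `A² = 1`. Conversely, the two conditions say exactly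
that `(X - Y)ᴴ (X + Y) = 0`, i.e. every column of `X + Y` is orthogonal to every column of
`X - Y`. The reflection in the orthogonal complement `K` of the column space of `X - Y` therefore
fixes the columns of `X + Y` and negates those of `X - Y`, hence maps each column
`x = ((x + y) + (x - y)) / 2` of `X` to the corresponding column `y` of `Y`.
-/

open Matrix

section InnerProductSpace

variable {𝕜 E : Type*} [RCLike 𝕜] [NormedAddCommGroup E] [InnerProductSpace 𝕜 E]

theorem Submodule.isSymmetric_reflection (K : Submodule 𝕜 E) [K.HasOrthogonalProjection] :
    (K.reflection : E →ₗ[𝕜] E).IsSymmetric := fun x y => by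
  conv_lhs => rw [← K.reflection_reflection y]
  exact K.reflection.inner_map_map x (K.reflection y)

theorem Submodule.reflection_eq_of_add_mem_of_sub_mem_orthogonal (K : Submodule 𝕜 E)
    [K.HasOrthogonalProjection] {u v : E} (hadd : u + v ∈ K) (hsub : u - v ∈ Kᗮ) :
    K.reflection u = v := by
  have h₁ : K.reflection (u + v) = u + v := K.reflection_mem_subspace_eq_self hadd
  have h₂ : K.reflection (u - v) = -(u - v) :=
    K.reflection_mem_subspace_orthogonalComplement_eq_neg hsub
  rw [map_add] at h₁
  rw [map_sub] at h₂
  have h : (2 : 𝕜) • K.reflection u = (2 : 𝕜) • v := by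
    linear_combination (norm := module) h₁ + h₂
  exact smul_right_injective E two_ne_zero h

theorem exists_reflection_apply_eq_of_inner_sub_add_eq_zero [FiniteDimensional 𝕜 E] {ι : Type*}
    (x y : ι → E) (h : ∀ i j, inner 𝕜 (x i - y i) (x j + y j) = 0) :
    ∃ K : Submodule 𝕜 E, ∀ i, K.reflection (x i) = y i := by
  set U := Submodule.span 𝕜 (Set.range (x - y))
  have hUV : U ⟂ Submodule.span 𝕜 (Set.range (x + y)) := by
    rw [Submodule.isOrtho_span]
    rintro _ ⟨i, rfl⟩ _ ⟨j, rfl⟩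
    exact h i j
  refine ⟨Uᗮ, fun i => Uᗮ.reflection_eq_of_add_mem_of_sub_mem_orthogonal ?_ ?_⟩
  · exact hUV.symm.le (Submodule.subset_span ⟨i, rfl⟩)
  · exact U.le_orthogonal_orthogonal (Submodule.subset_span ⟨i, rfl⟩)

end InnerProductSpace

namespace Matrix

variable {m n : Type*} [Fintype m]

section StarRing

variable {R : Type*} [Ring R] [StarRing R]

theorem IsHermitian.conjTranspose_mul_of_mul_self_eq_one [DecidableEq m] {A : Matrix m m R}
    (hA : A.IsHermitian) (hA2 : A * A = 1) (X : Matrix m n R) :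
    (Xᴴ * (A * X)).IsHermitian ∧ Xᴴ * X = (A * X)ᴴ * (A * X) := by
  refine ⟨?_, ?_⟩
  · rw [IsHermitian, conjTranspose_mul, conjTranspose_mul, conjTranspose_conjTranspose, hA.eq,
      Matrix.mul_assoc]
  · rw [conjTranspose_mul, hA.eq, Matrix.mul_assoc, ← Matrix.mul_assoc A, hA2, Matrix.one_mul]

theorem conjTranspose_sub_mul_add_eq_zero {X Y : Matrix m n R} (hH : (Xᴴ * Y).IsHermitian)
    (hXY : Xᴴ * X = Yᴴ * Y) : (X - Y)ᴴ * (X + Y) = 0 := by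
  have hYX : Yᴴ * X = Xᴴ * Y := by
    simpa only [conjTranspose_mul, conjTranspose_conjTranspose] using hH.eq
  rw [conjTranspose_sub, Matrix.sub_mul, Matrix.mul_add, Matrix.mul_add, hXY, hYX]
  abel

end StarRing

variable {𝕜 : Type*} [RCLike 𝕜]

theorem inner_toLp_transpose_toLp_transpose (M N : Matrix m n 𝕜) (i j : n) :
    inner 𝕜 (WithLp.toLp 2 (Mᵀ i)) (WithLp.toLp 2 (Nᵀ j)) = (Mᴴ * N) i j := by
  rw [EuclideanSpace.inner_toLp_toLp, dotProduct_comm]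
  rfl

theorem exists_isHermitian_mul_self_eq_one_mul_eq [DecidableEq m] {X Y : Matrix m n 𝕜}
    (hH : (Xᴴ * Y).IsHermitian) (hXY : Xᴴ * X = Yᴴ * Y) :
    ∃ A : Matrix m m 𝕜, A.IsHermitian ∧ A * A = 1 ∧ A * X = Y := by
  have hDS := conjTranspose_sub_mul_add_eq_zero hH hXY
  obtain ⟨K, hK⟩ := exists_reflection_apply_eq_of_inner_sub_add_eq_zero
    (fun j => WithLp.toLp 2 (Xᵀ j)) (fun j => WithLp.toLp 2 (Yᵀ j)) fun i j =>
      (inner_toLp_transpose_toLp_transpose (X - Y) (X + Y) i j).trans (by rw [hDS, zero_apply])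
  set R : EuclideanSpace 𝕜 m →L[𝕜] EuclideanSpace 𝕜 m :=
    K.reflection.toContinuousLinearEquiv.toContinuousLinearMap
  refine ⟨(toEuclideanCLM (n := m) (𝕜 := 𝕜)).symm R, ?_, ?_, ?_⟩
  · rw [← isSymmetric_toEuclideanLin_iff, ← coe_toEuclideanCLM_eq_toEuclideanLin,
      StarAlgEquiv.apply_symm_apply]
    exact K.isSymmetric_reflection
  · have hR : R * R = 1 := ContinuousLinearMap.ext K.reflection_reflection
    rw [← map_mul, hR, map_one]
  · ext i j
    show (_ *ᵥ Xᵀ j) i = _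
    rw [← ofLp_toEuclideanCLM, StarAlgEquiv.apply_symm_apply]
    exact congrArg (· i) (congrArg WithLp.ofLp (hK j))

end Matrix

theorem stmt_16_general {𝔽 : Type*} [RCLike 𝔽] (m n : ℕ)
    (X Y : Matrix (Fin m) (Fin n) 𝔽) :
    (∃ A : Matrix (Fin m) (Fin m) 𝔽, A.IsHermitian ∧ A * A = 1 ∧ A * X = Y) ↔
      ((Xᴴ * Y).IsHermitian ∧ Xᴴ * X = Yᴴ * Y) := by
  constructor
  · rintro ⟨A, hA, hA2, rfl⟩
    exact hA.conjTranspose_mul_of_mul_self_eq_one hA2 X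
  · rintro ⟨hH, hXY⟩
    exact exists_isHermitian_mul_self_eq_one_mul_eq hH hXY

/-- Reflection targeting: there is a reflection `A` (Hermitian with `A² = I`) with
`A X = Y` iff `Xᴴ Y` is Hermitian and `Xᴴ X = Yᴴ Y`. -/
theorem stmt_16 {𝔽 : Type*} [RCLike 𝔽] (m n : ℕ) (hn : 0 < n) (hmn : n ≤ m)
    (X Y : Matrix (Fin m) (Fin n) 𝔽) (hY : 1 ≤ Y.rank) :
    (∃ A : Matrix (Fin m) (Fin m) 𝔽, A.IsHermitian ∧ A * A = 1 ∧ A * X = Y) ↔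
      ((Xᴴ * Y).IsHermitian ∧ Xᴴ * X = Yᴴ * Y) :=
  stmt_16_general m n X Y
end

section
/- Let m, n be positive integers with m ≥ n, let 𝔽 be ℝ or ℂ, and let X, Y be m×n matrices over 𝔽 with Y ≠ 0. There exists an orthogonal projection m×m matrix A over 𝔽 (i.e., A is Hermitian and A² = A) with A X = Y if and only if Yᴴ X = Yᴴ Y. -/
/-!
If `A` is an orthogonal projection, then `(A X)ᴴ X = Xᴴ A X = Xᴴ A A X = (A X)ᴴ (A X)`.
Conversely, `Yᴴ (X - Y) = 0` says that the columns of `X - Y` are orthogonal to the column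
space of `Y`, so the orthogonal projection onto that column space fixes `Y` and kills `X - Y`.
-/

open Matrix WithLp

namespace Matrix

theorem conjTranspose_mul_eq_of_isStarProjection {α m n : Type*} [Semiring α] [StarRing α]
    [Fintype m] {P : Matrix m m α} (hP : IsStarProjection P) (X : Matrix m n α) :
    (P * X)ᴴ * X = (P * X)ᴴ * (P * X) := by
  rw [conjTranspose_mul, hP.isSelfAdjoint.isHermitian.eq, Matrix.mul_assoc, Matrix.mul_assoc,
    ← Matrix.mul_assoc P P X, hP.isIdempotentElem.eq]

variable {𝕜 m n : Type*} [RCLike 𝕜] [Fintype m] [DecidableEq m] [Fintype n] [DecidableEq n]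

noncomputable def columnSpaceProjection (Y : Matrix m n 𝕜) : Matrix m m 𝕜 :=
  (toEuclideanCLM (n := m) (𝕜 := 𝕜)).symm (LinearMap.range (toEuclideanLin Y)).starProjection

theorem isStarProjection_columnSpaceProjection (Y : Matrix m n 𝕜) :
    IsStarProjection (columnSpaceProjection Y) :=
  isStarProjection_starProjection.map (toEuclideanCLM (n := m) (𝕜 := 𝕜)).symm

theorem columnSpaceProjection_mulVec (Y : Matrix m n 𝕜) (w : m → 𝕜) :
    columnSpaceProjection Y *ᵥ w =
      ofLp ((LinearMap.range (toEuclideanLin Y)).starProjection (toLp 2 w)) := by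
  rw [← ofLp_toEuclideanCLM]
  simp [columnSpaceProjection]

theorem columnSpaceProjection_mul_self (Y : Matrix m n 𝕜) : columnSpaceProjection Y * Y = Y := by
  refine ext_iff_mulVec.2 fun v => ?_
  rw [← mulVec_mulVec, columnSpaceProjection_mulVec, Submodule.starProjection_eq_self_iff.2]
  exact ⟨toLp 2 v, rfl⟩

theorem columnSpaceProjection_mul_eq_zero {l : Type*} [Fintype l] {Y : Matrix m n 𝕜}
    {W : Matrix m l 𝕜} (h : Yᴴ * W = 0) : columnSpaceProjection Y * W = 0 := by
  refine ext_iff_mulVec.2 fun v => ?_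
  rw [← mulVec_mulVec, columnSpaceProjection_mulVec, zero_mulVec,
    (Submodule.starProjection_apply_eq_zero_iff _).2, ofLp_zero]
  rintro _ ⟨u, rfl⟩
  rw [← LinearMap.adjoint_inner_right, ← toEuclideanLin_conjTranspose_eq_adjoint, toLpLin_toLp,
    toLin'_apply, mulVec_mulVec, h, zero_mulVec, toLp_zero, inner_zero_right]

end Matrix

theorem stmt_17_general {𝔽 : Type*} [RCLike 𝔽] (m n : ℕ)
    (X Y : Matrix (Fin m) (Fin n) 𝔽) :
    (∃ A : Matrix (Fin m) (Fin m) 𝔽, A.IsHermitian ∧ A * A = A ∧ A * X = Y) ↔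
      Yᴴ * X = Yᴴ * Y := by
  constructor
  · rintro ⟨A, hA, hAA, rfl⟩
    exact conjTranspose_mul_eq_of_isStarProjection ⟨hAA, hA.isSelfAdjoint⟩ X
  · intro h
    have hP := isStarProjection_columnSpaceProjection Y
    refine ⟨columnSpaceProjection Y, hP.isSelfAdjoint.isHermitian, hP.isIdempotentElem, ?_⟩
    have hXY : Yᴴ * (X - Y) = 0 := by rw [Matrix.mul_sub, h, sub_self]
    calc columnSpaceProjection Y * X
        = columnSpaceProjection Y * Y + columnSpaceProjection Y * (X - Y) := by
          rw [← Matrix.mul_add, add_sub_cancel]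
      _ = Y := by
          rw [columnSpaceProjection_mul_self, columnSpaceProjection_mul_eq_zero hXY, add_zero]

/-- Orthogonal projection targeting: there is an orthogonal projection `A`
(Hermitian with `A² = A`) with `A X = Y` iff `Yᴴ X = Yᴴ Y`. -/
theorem stmt_17 {𝔽 : Type*} [RCLike 𝔽] (m n : ℕ) (hn : 0 < n) (hmn : n ≤ m)
    (X Y : Matrix (Fin m) (Fin n) 𝔽) (hY : Y ≠ 0) :
    (∃ A : Matrix (Fin m) (Fin m) 𝔽, A.IsHermitian ∧ A * A = A ∧ A * X = Y) ↔
      Yᴴ * X = Yᴴ * Y :=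
  stmt_17_general m n X Y
end

section
/- Let m, n be positive integers with m ≥ n, and let X, Y be m×n complex matrices with X ≠ 0. There exists a complex symmetric m×m matrix A (i.e., Aᵀ = A) with A X = Y if and only if null X ⊆ null Y and Xᵀ Y is symmetric (i.e., (Xᵀ Y)ᵀ = Xᵀ Y). -/
/-!
A linear map `f` has a generalized inverse `g` with `f g f = f` (invert `f` on its range and
extend by a left inverse of the inclusion of the range). For such a generalized inverse `G` of `X`,
the null-space condition gives `Y G X = Y`, and then `A = Y G + (Y G)ᵀ - Gᵀ Xᵀ Y G` is symmetric
when `Xᵀ Y` is, and satisfies `A X = Y + Gᵀ (Yᵀ X - Xᵀ Y) = Y`.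
-/

open Matrix

theorem LinearMap.exists_comp_comp_eq_self {K V W : Type*} [Field K] [AddCommGroup V]
    [Module K V] [AddCommGroup W] [Module K W] (f : V →ₗ[K] W) :
    ∃ g : W →ₗ[K] V, f ∘ₗ g ∘ₗ f = f := by
  obtain ⟨s, hs⟩ := f.rangeRestrict.exists_rightInverse_of_surjective f.range_rangeRestrict
  obtain ⟨r, hr⟩ := (range f).subtype.exists_leftInverse_of_injective (range f).ker_subtype
  refine ⟨s ∘ₗ r, LinearMap.ext fun v => ?_⟩
  have hrf : r (f v) = f.rangeRestrict v := LinearMap.congr_fun hr (f.rangeRestrict v)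
  have hfs : f (s (f.rangeRestrict v)) = f v :=
    congrArg Subtype.val (LinearMap.congr_fun hs (f.rangeRestrict v))
  simp [hrf, hfs]

namespace Matrix

variable {K m n : Type*} [Field K] [Fintype m] [Fintype n]

theorem exists_mul_mul_eq_self_s18 (X : Matrix m n K) :
    ∃ G : Matrix n m K, X * G * X = X := by
  classical
  obtain ⟨g, hg⟩ := (toLin' X).exists_comp_comp_eq_self
  refine ⟨LinearMap.toMatrix' g, toLin'.injective ?_⟩
  rwa [toLin'_mul, toLin'_mul, toLin'_toMatrix', LinearMap.comp_assoc]

theorem mul_mul_eq_of_mulVec_eq_zero {X Y : Matrix m n K} {G : Matrix n m K}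
    (hG : X * G * X = X) (hXY : ∀ u, X *ᵥ u = 0 → Y *ᵥ u = 0) : Y * G * X = Y := by
  refine ext_iff_mulVec.2 fun u => ?_
  have hker : X *ᵥ ((G * X) *ᵥ u - u) = 0 := by
    rw [mulVec_sub, mulVec_mulVec, ← Matrix.mul_assoc, hG, sub_self]
  simpa [mulVec_sub, mulVec_mulVec, Matrix.mul_assoc, sub_eq_zero] using hXY _ hker

theorem exists_transpose_eq_mul_eq_iff (X Y : Matrix m n K) :
    (∃ A : Matrix m m K, Aᵀ = A ∧ A * X = Y) ↔
      (∀ u, X *ᵥ u = 0 → Y *ᵥ u = 0) ∧ (Xᵀ * Y)ᵀ = Xᵀ * Y := by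
  constructor
  · rintro ⟨A, hA, rfl⟩
    refine ⟨fun u hu => by rw [← mulVec_mulVec, hu, mulVec_zero], ?_⟩
    rw [transpose_mul, transpose_mul, transpose_transpose, hA, Matrix.mul_assoc]
  · rintro ⟨hXY, hsymm⟩
    obtain ⟨G, hG⟩ := exists_mul_mul_eq_self_s18 X
    have hYGX : Y * G * X = Y := mul_mul_eq_of_mulVec_eq_zero hG hXY
    refine ⟨Y * G + (Y * G)ᵀ - Gᵀ * (Xᵀ * Y) * G, ?_, ?_⟩
    · rw [transpose_sub, transpose_add, transpose_transpose, transpose_mul (Gᵀ * (Xᵀ * Y)) G,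
        transpose_mul Gᵀ, hsymm, transpose_transpose, add_comm, Matrix.mul_assoc Gᵀ]
    · have hYX : Yᵀ * X = Xᵀ * Y := by rw [← hsymm, transpose_mul, transpose_transpose]
      rw [Matrix.sub_mul, Matrix.add_mul, hYGX, transpose_mul, Matrix.mul_assoc Gᵀ, hYX]
      simp only [Matrix.mul_assoc, hYGX, add_sub_cancel_right]

end Matrix

theorem stmt_18_general (m n : ℕ)
    (X Y : Matrix (Fin m) (Fin n) ℂ) :
    (∃ A : Matrix (Fin m) (Fin m) ℂ, Aᵀ = A ∧ A * X = Y) ↔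
      ({u : Fin n → ℂ | X.mulVec u = 0} ⊆ {u | Y.mulVec u = 0} ∧
        (Xᵀ * Y)ᵀ = Xᵀ * Y) :=
  exists_transpose_eq_mul_eq_iff X Y

/-- Complex symmetric targeting: there is a complex symmetric `A` (`Aᵀ = A`) with
`A X = Y` iff `null X ⊆ null Y` and `Xᵀ Y` is symmetric. -/
theorem stmt_18 (m n : ℕ) (hn : 0 < n) (hmn : n ≤ m)
    (X Y : Matrix (Fin m) (Fin n) ℂ) (hX : X ≠ 0) :
    (∃ A : Matrix (Fin m) (Fin m) ℂ, Aᵀ = A ∧ A * X = Y) ↔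
      ({u : Fin n → ℂ | X.mulVec u = 0} ⊆ {u | Y.mulVec u = 0} ∧
        (Xᵀ * Y)ᵀ = Xᵀ * Y) :=
  stmt_18_general m n X Y
end
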